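/- arXiv:2311.01990 — 2 statements merged into one kernel-verified Lean document; each statement's English description precedes it below -/
import Mathlib

section
/- (von Neumann–Morgenstern, finite case) Let X be a finite nonempty set and ≼ a binary relation on Dist(X). Then ≼ is a total convex preorder satisfying interpolation if and only if there exists u: X → ℝ such that for all A,B ∈ Dist(X), A ≼ B ⟺ Σ_x u(x)A(x) ≤ Σ_x u(x)B(x). -/
open Finset

/-- `p` is a probability mass function on the finite type `X`. -/
def IsDist {X : Type*} [Fintype X] (p : X → ℝ) : Prop :=
  (∀ x, 0 ≤ p x) ∧ ∑ x, p x = 1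

/-- Pointwise convex combination of two (distributions viewed as) functions. -/
def mix {X : Type*} (α : ℝ) (A B : X → ℝ) : X → ℝ :=
  fun x => α * A x + (1 - α) * B x

/-- Expected value of `u` under `A`. -/
def expVal {X : Type*} [Fintype X] (u : X → ℝ) (A : X → ℝ) : ℝ := ∑ x, u x * A x

/-! By transitivity and convexity, a mixture of distributions lying below (above) a
given one lies below (above) it too; as every distribution is a mixture of point masses, the best
and worst outcomes `M` and `m` bound everything. If `M ∼ m` all distributions are indifferent.
Otherwise interpolation calibrates each outcome `x` as `δₓ ∼ u x • M + (1 - u x) • m`, mixing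
these indifferences shows `A ∼ E_u A • M + (1 - E_u A) • m`, and on the segment from `m` to `M`
the preference is the order of the weight of `M`. -/

section Mix

variable {X : Type*}

lemma mix_self (t : ℝ) (A : X → ℝ) : mix t A A = A := by
  funext x; simp only [mix]; ring

lemma mix_zero (A B : X → ℝ) : mix 0 A B = B := by
  funext x; simp only [mix]; ring

lemma mix_one (A B : X → ℝ) : mix 1 A B = A := by
  funext x; simp only [mix]; ring

lemma mix_comm (t : ℝ) (A B : X → ℝ) : mix t A B = mix (1 - t) B A := by
  funext x; simp only [mix]; ring

lemma mix_mix_mix (t a b : ℝ) (M m : X → ℝ) :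
    mix t (mix a M m) (mix b M m) = mix (t * a + (1 - t) * b) M m := by
  funext x; simp only [mix]; ring

variable [Fintype X]

lemma isDist_mix {t : ℝ} (ht0 : 0 ≤ t) (ht1 : t ≤ 1) {A B : X → ℝ} (hA : IsDist A)
    (hB : IsDist B) : IsDist (mix t A B) := by
  refine ⟨fun x => ?_, ?_⟩
  · have := hA.1 x; have := hB.1 x
    simp only [mix]; nlinarith
  · simp only [mix, sum_add_distrib, ← mul_sum, hA.2, hB.2]; ring

lemma exists_common_mix_sub {α β : ℝ} (hβ : 0 ≤ β) (hα : α ≤ 1) {M m : X → ℝ}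
    (hM : IsDist M) (hm : IsDist m) :
    ∃ C, IsDist C ∧ mix α M m = mix (α - β) M C ∧ mix β M m = mix (α - β) m C := by
  -- `C` carries the common part `β • M + (1 - α) • m` of the two mixtures.
  set d := 1 - α + β
  have hd : d * (β / d) = β := by
    rcases eq_or_ne d 0 with h | h
    · have : β = 0 := by linarith
      simp [h, this]
    · field_simp
  refine ⟨mix (β / d) M m, isDist_mix (div_nonneg hβ (by linarith))
    (div_le_one_of_le₀ (by linarith) (by linarith)) hM hm, ?_, ?_⟩ <;>
  · funext x; simp only [mix]; linear_combination (m x - M x) * hd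

end Mix

section Dist

variable {X : Type*} [Fintype X]

open Classical in
noncomputable def dirac (a : X) : X → ℝ := Pi.single a 1

open Classical in
lemma isDist_dirac (a : X) : IsDist (dirac a) := single_mem_stdSimplex ℝ a

lemma expVal_dirac (u : X → ℝ) (a : X) : expVal u (dirac a) = u a := by
  classical
  simp [expVal, dirac, Pi.single_apply]

lemma expVal_mix (u : X → ℝ) (t : ℝ) (A B : X → ℝ) :
    expVal u (mix t A B) = t * expVal u A + (1 - t) * expVal u B := by
  simp only [expVal, mix, mul_sum, ← sum_add_distrib]
  exact sum_congr rfl fun x _ => by ring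

lemma expVal_mem_Icc {u : X → ℝ} (hu : ∀ x, u x ∈ Set.Icc 0 1) {A : X → ℝ} (hA : IsDist A) :
    expVal u A ∈ Set.Icc 0 1 :=
  ⟨sum_nonneg fun x _ => mul_nonneg (hu x).1 (hA.1 x),
    hA.2 ▸ sum_le_sum fun x _ => mul_le_of_le_one_left (hA.1 x) (hu x).2⟩

@[elab_as_elim]
theorem IsDist.induction {Φ : (X → ℝ) → Prop} (hdirac : ∀ x, Φ (dirac x))
    (hmix : ∀ t : ℝ, 0 ≤ t → t ≤ 1 → ∀ A B, IsDist A → IsDist B → Φ A → Φ B → Φ (mix t A B))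
    {A : X → ℝ} (hA : IsDist A) : Φ A := by
  classical
  have hconv : Convex ℝ {A | IsDist A ∧ Φ A} := by
    rintro A ⟨hA, hΦA⟩ B ⟨hB, hΦB⟩ a b ha hb hab
    obtain rfl : b = 1 - a := by linarith
    exact ⟨isDist_mix ha (by linarith) hA hB, hmix a ha (by linarith) A B hA hB hΦA hΦB⟩
  have hsub : Set.range (fun x : X => (Pi.single x 1 : X → ℝ)) ⊆ {A | IsDist A ∧ Φ A} := by
    rintro _ ⟨x, rfl⟩
    exact ⟨isDist_dirac x, hdirac x⟩
  have hhull := convexHull_min hsub hconv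
  rw [convexHull_rangle_single_eq_stdSimplex] at hhull
  exact (hhull hA).2

end Dist

section Preorder

variable {X : Type*} [Fintype X]

structure IsConvexPreorder (R : (X → ℝ) → (X → ℝ) → Prop) : Prop where
  refl : ∀ A, IsDist A → R A A
  trans : ∀ A B C, IsDist A → IsDist B → IsDist C → R A B → R B C → R A C
  mix_iff : ∀ α : ℝ, 0 < α → α < 1 → ∀ A B C, IsDist A → IsDist B → IsDist C →
    (R A B ↔ R (mix α A C) (mix α B C))

theorem exists_forall_dirac_rel [Nonempty X] {R : (X → ℝ) → (X → ℝ) → Prop}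
    (htrans : ∀ A B C, IsDist A → IsDist B → IsDist C → R A B → R B C → R A C)
    (htot : ∀ A B, IsDist A → IsDist B → R A B ∨ R B A) :
    ∃ a, ∀ x, R (dirac x) (dirac a) := by
  let r : X → X → Prop := fun x y => R (dirac x) (dirac y)
  have : IsTrans X r :=
    ⟨fun x y z => htrans _ _ _ (isDist_dirac x) (isDist_dirac y) (isDist_dirac z)⟩
  have hrefl (x : X) : r x x := (htot _ _ (isDist_dirac x) (isDist_dirac x)).elim id id
  have hdir : Directed r id := fun x y =>
    (htot _ _ (isDist_dirac x) (isDist_dirac y)).elim (fun h => ⟨y, h, hrefl y⟩)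
      (fun h => ⟨x, hrefl x, h⟩)
  exact hdir.finite_le id

namespace IsConvexPreorder

variable {R : (X → ℝ) → (X → ℝ) → Prop} (h : IsConvexPreorder R)
include h

theorem flip : IsConvexPreorder (fun A B => R B A) where
  refl := h.refl
  trans A B C hA hB hC hAB hBC := h.trans C B A hC hB hA hBC hAB
  mix_iff α hα0 hα1 A B C hA hB hC := h.mix_iff α hα0 hα1 B A C hB hA hC

theorem rel_congr {A A' B B' : X → ℝ} (hA : IsDist A) (hA' : IsDist A') (hB : IsDist B)
    (hB' : IsDist B') (hAA' : R A A') (hA'A : R A' A) (hBB' : R B B') (hB'B : R B' B) :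
    R A B ↔ R A' B' :=
  ⟨fun hAB => h.trans _ _ _ hA' hA hB' hA'A (h.trans _ _ _ hA hB hB' hAB hBB'),
    fun hAB => h.trans _ _ _ hA hA' hB hAA' (h.trans _ _ _ hA' hB' hB hAB hB'B)⟩

theorem mix_rel_mix_left_iff {t : ℝ} (ht0 : 0 < t) (ht1 : t ≤ 1) {A B C : X → ℝ} (hA : IsDist A)
    (hB : IsDist B) (hC : IsDist C) : R (mix t A C) (mix t B C) ↔ R A B := by
  rcases ht1.lt_or_eq with ht1 | rfl
  · exact (h.mix_iff t ht0 ht1 A B C hA hB hC).symm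
  · simp only [mix_one]

theorem mix_rel_mix_left {t : ℝ} (ht0 : 0 ≤ t) (ht1 : t ≤ 1) {A A' C : X → ℝ} (hA : IsDist A)
    (hA' : IsDist A') (hC : IsDist C) (hAA' : R A A') : R (mix t A C) (mix t A' C) := by
  rcases ht0.eq_or_lt with rfl | ht0
  · simpa only [mix_zero] using h.refl C hC
  · exact (h.mix_rel_mix_left_iff ht0 ht1 hA hA' hC).2 hAA'

theorem mix_rel_mix {t : ℝ} (ht0 : 0 ≤ t) (ht1 : t ≤ 1) {A A' B B' : X → ℝ} (hA : IsDist A)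
    (hA' : IsDist A') (hB : IsDist B) (hB' : IsDist B') (hAA' : R A A') (hBB' : R B B') :
    R (mix t A B) (mix t A' B') := by
  refine h.trans _ (mix t A' B) _ (isDist_mix ht0 ht1 hA hB) (isDist_mix ht0 ht1 hA' hB)
    (isDist_mix ht0 ht1 hA' hB') (h.mix_rel_mix_left ht0 ht1 hA hA' hB hAA') ?_
  rw [mix_comm t A' B, mix_comm t A' B']
  exact h.mix_rel_mix_left (by linarith) (by linarith) hB hB' hA' hBB'

theorem rel_of_forall_dirac_rel {M : X → ℝ} (hM : IsDist M) (hdM : ∀ x, R (dirac x) M)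
    {A : X → ℝ} (hA : IsDist A) : R A M :=
  IsDist.induction hdM (fun t ht0 ht1 A B hA hB hAM hBM => by
    simpa only [mix_self] using h.mix_rel_mix ht0 ht1 hA hM hB hM hAM hBM) hA

theorem mix_rel_mix_iff_of_lt {α β : ℝ} (hβ : 0 ≤ β) (hβα : β < α) (hα : α ≤ 1)
    {M m : X → ℝ} (hM : IsDist M) (hm : IsDist m) :
    (R (mix β M m) (mix α M m) ↔ R m M) ∧ (R (mix α M m) (mix β M m) ↔ R M m) := by
  obtain ⟨C, hC, hαC, hβC⟩ := exists_common_mix_sub hβ hα hM hm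
  rw [hαC, hβC]
  exact ⟨h.mix_rel_mix_left_iff (sub_pos.2 hβα) (by linarith) hm hM hC,
    h.mix_rel_mix_left_iff (sub_pos.2 hβα) (by linarith) hM hm hC⟩

theorem mix_rel_mix_iff {M m : X → ℝ} (hM : IsDist M) (hm : IsDist m) (hmM : R m M)
    (hMm : ¬R M m) {a b : ℝ} (ha : a ∈ Set.Icc 0 1) (hb : b ∈ Set.Icc 0 1) :
    R (mix a M m) (mix b M m) ↔ a ≤ b := by
  refine ⟨fun hab => ?_, fun hab => ?_⟩
  · by_contra! hba
    exact hMm ((h.mix_rel_mix_iff_of_lt hb.1 hba ha.2 hM hm).2.1 hab)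
  · rcases hab.eq_or_lt with rfl | hab
    · exact h.refl _ (isDist_mix ha.1 ha.2 hM hm)
    · exact (h.mix_rel_mix_iff_of_lt ha.1 hab hb.2 hM hm).1.2 hmM

theorem equiv_mix_expVal {M m : X → ℝ} (hM : IsDist M) (hm : IsDist m) {u : X → ℝ}
    (hu : ∀ x, u x ∈ Set.Icc 0 1)
    (hcal : ∀ x, R (dirac x) (mix (u x) M m) ∧ R (mix (u x) M m) (dirac x))
    {A : X → ℝ} (hA : IsDist A) :
    R A (mix (expVal u A) M m) ∧ R (mix (expVal u A) M m) A := by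
  refine IsDist.induction (fun x => by simpa only [expVal_dirac] using hcal x) ?_ hA
  rintro t ht0 ht1 A B hA hB ⟨hAl, hAr⟩ ⟨hBl, hBr⟩
  have hdA := isDist_mix (expVal_mem_Icc hu hA).1 (expVal_mem_Icc hu hA).2 hM hm
  have hdB := isDist_mix (expVal_mem_Icc hu hB).1 (expVal_mem_Icc hu hB).2 hM hm
  rw [expVal_mix, ← mix_mix_mix]
  exact ⟨h.mix_rel_mix ht0 ht1 hA hdA hB hdB hAl hBl, h.mix_rel_mix ht0 ht1 hdA hA hdB hB hAr hBr⟩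

end IsConvexPreorder

end Preorder

section Utility

variable {X : Type*} [Fintype X] {R : (X → ℝ) → (X → ℝ) → Prop}

theorem IsConvexPreorder.exists_expVal [Nonempty X] (h : IsConvexPreorder R)
    (htot : ∀ A B, IsDist A → IsDist B → R A B ∨ R B A)
    (hinterp : ∀ A B C, IsDist A → IsDist B → IsDist C → R A B → R B C →
      ∃ α : ℝ, 0 ≤ α ∧ α ≤ 1 ∧ R (mix α A C) B ∧ R B (mix α A C)) :
    ∃ u : X → ℝ, ∀ A B, IsDist A → IsDist B → (R A B ↔ expVal u A ≤ expVal u B) := by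
  obtain ⟨a, ha⟩ := exists_forall_dirac_rel h.trans htot
  obtain ⟨b, hb⟩ := exists_forall_dirac_rel h.flip.trans fun A B hA hB => (htot A B hA hB).symm
  have hM := isDist_dirac a
  have hm := isDist_dirac b
  have le_M {A} (hA : IsDist A) : R A (dirac a) := h.rel_of_forall_dirac_rel hM ha hA
  have m_le {A} (hA : IsDist A) : R (dirac b) A := h.flip.rel_of_forall_dirac_rel hm hb hA
  by_cases hMm : R (dirac a) (dirac b)
  · refine ⟨0, fun A B hA hB => iff_of_true ?_ (by simp [expVal])⟩
    exact h.trans _ _ _ hA hm hB (h.trans _ _ _ hA hM hm (le_M hA) hMm) (m_le hB)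
  have hcal (x : X) : ∃ t ∈ Set.Icc (0 : ℝ) 1,
      R (dirac x) (mix t (dirac a) (dirac b)) ∧ R (mix t (dirac a) (dirac b)) (dirac x) := by
    obtain ⟨t, ht0, ht1, hl, hr⟩ :=
      hinterp _ _ _ hm (isDist_dirac x) hM (m_le (isDist_dirac x)) (le_M (isDist_dirac x))
    exact ⟨1 - t, ⟨by linarith, by linarith⟩, by rwa [← mix_comm], by rwa [← mix_comm]⟩
  choose u hu hcal using hcal
  refine ⟨u, fun A B hA hB => ?_⟩
  obtain ⟨hAl, hAr⟩ := h.equiv_mix_expVal hM hm hu hcal hA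
  obtain ⟨hBl, hBr⟩ := h.equiv_mix_expVal hM hm hu hcal hB
  have hEA := expVal_mem_Icc hu hA
  have hEB := expVal_mem_Icc hu hB
  rw [h.rel_congr hA (isDist_mix hEA.1 hEA.2 hM hm) hB (isDist_mix hEB.1 hEB.2 hM hm)
    hAl hAr hBl hBr]
  exact h.mix_rel_mix_iff hM hm (m_le hM) hMm hEA hEB

variable {u : X → ℝ} (hu : ∀ A B, IsDist A → IsDist B → (R A B ↔ expVal u A ≤ expVal u B))
include hu

theorem IsConvexPreorder.of_expVal : IsConvexPreorder R where
  refl A hA := (hu A A hA hA).2 le_rfl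
  trans A B C hA hB hC hAB hBC :=
    (hu A C hA hC).2 (((hu A B hA hB).1 hAB).trans ((hu B C hB hC).1 hBC))
  mix_iff t ht0 ht1 A B C hA hB hC := by
    rw [hu A B hA hB, hu _ _ (isDist_mix ht0.le ht1.le hA hC) (isDist_mix ht0.le ht1.le hB hC),
      expVal_mix, expVal_mix, add_le_add_iff_right, mul_le_mul_iff_of_pos_left ht0]

theorem rel_total_of_expVal (A B : X → ℝ) (hA : IsDist A) (hB : IsDist B) : R A B ∨ R B A :=
  (le_total _ _).imp (hu A B hA hB).2 (hu B A hB hA).2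

theorem exists_mix_equiv_of_expVal (A B C : X → ℝ) (hA : IsDist A) (hB : IsDist B)
    (hC : IsDist C) (hAB : R A B) (hBC : R B C) :
    ∃ α : ℝ, 0 ≤ α ∧ α ≤ 1 ∧ R (mix α A C) B ∧ R B (mix α A C) := by
  have hmem : expVal u B ∈ segment ℝ (expVal u C) (expVal u A) := by
    rw [segment_eq_uIcc]
    exact Set.Icc_subset_uIcc' ⟨(hu A B hA hB).1 hAB, (hu B C hB hC).1 hBC⟩
  rw [segment_eq_image] at hmem
  obtain ⟨t, ⟨ht0, ht1⟩, ht⟩ := hmem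
  have hE : expVal u (mix t A C) = expVal u B := by
    rw [expVal_mix, ← ht]
    simp only [smul_eq_mul]
    ring
  have hd := isDist_mix ht0 ht1 hA hC
  exact ⟨t, ht0, ht1, (hu _ _ hd hB).2 hE.le, (hu _ _ hB hd).2 hE.ge⟩

end Utility

/-- von Neumann–Morgenstern, finite case. -/
theorem vnm_expected_utility {X : Type*} [Fintype X] [Nonempty X]
    (R : (X → ℝ) → (X → ℝ) → Prop) :
    ((∀ A, IsDist A → R A A) ∧
     (∀ A B C, IsDist A → IsDist B → IsDist C → R A B → R B C → R A C) ∧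
     (∀ A B, IsDist A → IsDist B → (R A B ∨ R B A)) ∧
     (∀ α : ℝ, 0 < α → α < 1 → ∀ A B C, IsDist A → IsDist B → IsDist C →
       (R A B ↔ R (mix α A C) (mix α B C))) ∧
     (∀ A B C, IsDist A → IsDist B → IsDist C → R A B → R B C →
       ∃ α : ℝ, 0 ≤ α ∧ α ≤ 1 ∧ R (mix α A C) B ∧ R B (mix α A C)))
    ↔ (∃ u : X → ℝ, ∀ A B, IsDist A → IsDist B → (R A B ↔ expVal u A ≤ expVal u B)) := by
  constructor
  · rintro ⟨hrefl, htrans, htot, hmix, hinterp⟩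
    exact IsConvexPreorder.exists_expVal ⟨hrefl, htrans, hmix⟩ htot hinterp
  · rintro ⟨u, hu⟩
    have h := IsConvexPreorder.of_expVal hu
    exact ⟨h.refl, h.trans, rel_total_of_expVal hu, h.mix_iff, exists_mix_equiv_of_expVal hu⟩
end

section
/- Let (𝒪,𝒜,T,e,≼) be a Direct Preference Process where ≼ is expressed by a reward function r: ℋ → ℝ. A policy π is ≼-optimal if and only if for every attainable history h_t, V_π(h_t; r) = sup_{π'} V_{π'}(h_t; r), where V_π(h_t; r) = 𝔼_π[Σ_{s=t}^T r(H_s) | H_t = h_t]. -/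
open Finset

/-- A history: an initial observation together with a list of action-observation pairs. -/
abbrev Hist (O A : Type*) := O × List (A × O)

/-- The length (time index) of a history. -/
def hlen {O A : Type*} (h : Hist O A) : ℕ := h.2.length

/-- Append an action-observation pair to a history. -/
def hext {O A : Type*} (h : Hist O A) (a : A) (o : O) : Hist O A :=
  (h.1, h.2 ++ [(a, o)])

/-- The length-`t` prefix of a history/trajectory. -/
def hpre {O A : Type*} (h : Hist O A) (t : ℕ) : Hist O A := (h.1, h.2.take t)

section DPP

variable {O A : Type*} [Fintype O] [Fintype A] [DecidableEq O] [DecidableEq A]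

/-- The finite set of all length-`T` histories (trajectories). -/
def trajFinset (O A : Type*) [Fintype O] [Fintype A] [DecidableEq O] [DecidableEq A]
    (T : ℕ) : Finset (Hist O A) :=
  Finset.image (fun p : O × (Fin T → A × O) => ((p.1, List.ofFn p.2) : Hist O A))
    Finset.univ

/-- `π` is a policy: a distribution over actions for each history. -/
def IsPolicy (π : Hist O A → A → ℝ) : Prop :=
  ∀ h, (∀ a, 0 ≤ π h a) ∧ ∑ a, π h a = 1

/-- `(ρ0, ρ)` is an environment: an initial observation distribution and
history-dependent transition probabilities. -/
def IsEnv (ρ0 : O → ℝ) (ρ : Hist O A → A → O → ℝ) : Prop :=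
  ((∀ o, 0 ≤ ρ0 o) ∧ ∑ o, ρ0 o = 1) ∧
    ∀ h a, (∀ o, 0 ≤ ρ h a o) ∧ ∑ o, ρ h a o = 1

/-- `Dpi ρ π n h` : the distribution over trajectories induced by starting at `h`
(with `n` steps remaining) and following policy `π` in environment `ρ`. -/
noncomputable def Dpi (ρ : Hist O A → A → O → ℝ) (π : Hist O A → A → ℝ) :
    ℕ → Hist O A → Hist O A → ℝ
  | 0, h, ω => if ω = h then 1 else 0
  | n + 1, h, ω => ∑ a, π h a * ∑ o, ρ h a o * Dpi ρ π n (hext h a o) ω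

/-- `D^π(h)` with horizon `T`. -/
noncomputable def DpiH (T : ℕ) (ρ : Hist O A → A → O → ℝ) (π : Hist O A → A → ℝ)
    (h : Hist O A) : Hist O A → ℝ :=
  Dpi ρ π (T - hlen h) h

/-- `D^π(h · a)` : take action `a` at `h`, then follow `π`. -/
noncomputable def DpiA (T : ℕ) (ρ : Hist O A → A → O → ℝ) (π : Hist O A → A → ℝ)
    (h : Hist O A) (a : A) : Hist O A → ℝ :=
  fun ω => ∑ o, ρ h a o * Dpi ρ π (T - hlen h - 1) (hext h a o) ω

/-- Attainable histories in environment `(ρ0, ρ)`. -/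
inductive Attainable (ρ0 : O → ℝ) (ρ : Hist O A → A → O → ℝ) : Hist O A → Prop
  | base (o : O) : 0 < ρ0 o → Attainable ρ0 ρ (o, ([] : List (A × O)))
  | step (h : Hist O A) (a : A) (o : O) :
      Attainable ρ0 ρ h → 0 < ρ h a o → Attainable ρ0 ρ (hext h a o)

/-- A distribution over trajectories (length-`T` histories). -/
def IsTrajDist (T : ℕ) (D : Hist O A → ℝ) : Prop :=
  (∀ ω, 0 ≤ D ω) ∧ (∀ ω, D ω ≠ 0 → hlen ω = T) ∧
    ∑ ω ∈ trajFinset O A T, D ω = 1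

/-- A distribution over the attainable trajectories `Ω^e`. -/
def IsAttDist (T : ℕ) (ρ0 : O → ℝ) (ρ : Hist O A → A → O → ℝ)
    (D : Hist O A → ℝ) : Prop :=
  IsTrajDist T D ∧ ∀ ω, D ω ≠ 0 → Attainable ρ0 ρ ω

/-- The restriction of `R` to `Dist(Ω^e)` is a total consistent preorder. -/
def RestrTotalConsistentPreorder (T : ℕ) (ρ0 : O → ℝ)
    (ρ : Hist O A → A → O → ℝ) (R : (Hist O A → ℝ) → (Hist O A → ℝ) → Prop) : Prop :=
  (∀ D, IsAttDist T ρ0 ρ D → R D D) ∧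
  (∀ D₁ D₂ D₃, IsAttDist T ρ0 ρ D₁ → IsAttDist T ρ0 ρ D₂ → IsAttDist T ρ0 ρ D₃ →
    R D₁ D₂ → R D₂ D₃ → R D₁ D₃) ∧
  (∀ D₁ D₂, IsAttDist T ρ0 ρ D₁ → IsAttDist T ρ0 ρ D₂ → (R D₁ D₂ ∨ R D₂ D₁)) ∧
  (∀ α : ℝ, 0 < α → α < 1 → ∀ D₁ D₂ D₃, IsAttDist T ρ0 ρ D₁ →
    IsAttDist T ρ0 ρ D₂ → IsAttDist T ρ0 ρ D₃ →
    R D₁ D₂ → R (mix α D₁ D₃) (mix α D₂ D₃))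

/-- `π` is a `≼`-optimal policy. -/
def OptimalPolicy (T : ℕ) (ρ0 : O → ℝ) (ρ : Hist O A → A → O → ℝ)
    (R : (Hist O A → ℝ) → (Hist O A → ℝ) → Prop) (π : Hist O A → A → ℝ) : Prop :=
  ∀ h, Attainable ρ0 ρ h → hlen h ≤ T →
    ∀ π', IsPolicy π' → R (DpiH T ρ π' h) (DpiH T ρ π h)

/-- The optimal action set of policy `π` at history `h`. -/
def OptActions (T : ℕ) (ρ : Hist O A → A → O → ℝ)
    (R : (Hist O A → ℝ) → (Hist O A → ℝ) → Prop) (π : Hist O A → A → ℝ)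
    (h : Hist O A) : Set A :=
  {a | ∀ a', R (DpiA T ρ π h a') (DpiA T ρ π h a)}

end DPP

/-- Expected total reward `𝔼_D[Σ_{t=0}^T r(H_t)]` of a trajectory distribution. -/
noncomputable def expTotalReward {O A : Type*} [Fintype O] [Fintype A]
    [DecidableEq O] [DecidableEq A] (T : ℕ) (r : Hist O A → ℝ)
    (D : Hist O A → ℝ) : ℝ :=
  ∑ ω ∈ trajFinset O A T, D ω * ∑ t ∈ Finset.range (T + 1), r (hpre ω t)

/-- The reward function `r` expresses the relation `R`. -/
def Expresses {O A : Type*} [Fintype O] [Fintype A] [DecidableEq O] [DecidableEq A]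
    (T : ℕ) (r : Hist O A → ℝ) (R : (Hist O A → ℝ) → (Hist O A → ℝ) → Prop) : Prop :=
  ∀ D₁ D₂ : Hist O A → ℝ, IsTrajDist T D₁ → IsTrajDist T D₂ →
    (R D₁ D₂ ↔ expTotalReward T r D₁ ≤ expTotalReward T r D₂)

/-- The `r`-value `V_π(h; r) = 𝔼_π[Σ_{s=t}^T r(H_s) | H_t = h]`. -/
noncomputable def Vval {O A : Type*} [Fintype O] [Fintype A]
    [DecidableEq O] [DecidableEq A] (T : ℕ) (ρ : Hist O A → A → O → ℝ)
    (r : Hist O A → ℝ) (π : Hist O A → A → ℝ) (h : Hist O A) : ℝ :=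
  ∑ ω ∈ trajFinset O A T, DpiH T ρ π h ω * ∑ s ∈ Finset.Icc (hlen h) T, r (hpre ω s)

/-!
Once `r` expresses `≼`, comparing `D^π'(h)` with `D^π(h)` is comparing expected total rewards.
Every trajectory in the support of `D^π(h)` extends `h`, so the rewards collected before time
`hlen h` are the same constant for every policy and cancel, leaving `V_π'(h) ≤ V_π(h)`.
Optimality is thus "`V_π(h)` is the greatest value at `h`", and since values are bounded
(uniformly in the policy) this is the same as `V_π(h) = sup_π' V_π'(h)`.
-/

theorem eq_csSup_iff_forall_le {α : Type*} [ConditionallyCompleteLattice α] {s : Set α} {a : α}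
    (hs : BddAbove s) (ha : a ∈ s) : a = sSup s ↔ ∀ b ∈ s, b ≤ a :=
  ⟨fun h _ hb => h ▸ le_csSup hs hb, fun h => (IsGreatest.csSup_eq ⟨ha, h⟩).symm⟩

theorem sum_mul_le_sum_abs {ι : Type*} (s : Finset ι) {p f : ι → ℝ} (hp0 : ∀ i, 0 ≤ p i)
    (hp1 : ∀ i, p i ≤ 1) : ∑ i ∈ s, p i * f i ≤ ∑ i ∈ s, |f i| := by
  refine Finset.sum_le_sum fun i _ => ?_
  calc p i * f i ≤ p i * |f i| := mul_le_mul_of_nonneg_left (le_abs_self _) (hp0 i)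
    _ ≤ |f i| := mul_le_of_le_one_left (abs_nonneg _) (hp1 i)

theorem sum_range_succ_eq_sum_range_add_sum_Icc {M : Type*} [AddCommMonoid M] (f : ℕ → M)
    {k T : ℕ} (hk : k ≤ T) :
    ∑ t ∈ Finset.range (T + 1), f t = ∑ t ∈ Finset.range k, f t + ∑ t ∈ Finset.Icc k T, f t := by
  rw [← Finset.Ico_add_one_right_eq_Icc, Finset.sum_range_add_sum_Ico f (by omega)]

section Trajectories

variable {O A : Type*} [Fintype O] [Fintype A] [DecidableEq O] [DecidableEq A]

def IsKernel (ρ : Hist O A → A → O → ℝ) : Prop :=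
  ∀ h a, (∀ o, 0 ≤ ρ h a o) ∧ ∑ o, ρ h a o = 1

omit [Fintype O] [Fintype A] [DecidableEq O] [DecidableEq A] in
theorem hlen_hext (h : Hist O A) (a : A) (o : O) : hlen (hext h a o) = hlen h + 1 := by
  simp [hlen, hext]

omit [Fintype O] [Fintype A] [DecidableEq O] [DecidableEq A] in
theorem hpre_hext {h : Hist O A} {t : ℕ} (ht : t ≤ hlen h) (a : A) (o : O) :
    hpre (hext h a o) t = hpre h t := by
  simp only [hpre, hext, List.take_append_of_le_length ht]

theorem mem_trajFinset {T : ℕ} {ω : Hist O A} : ω ∈ trajFinset O A T ↔ hlen ω = T := by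
  obtain ⟨o, l⟩ := ω
  simp only [trajFinset, Finset.mem_image, Finset.mem_univ, true_and, Prod.exists, Prod.mk.injEq,
    hlen]
  constructor
  · rintro ⟨_, f, -, rfl⟩
    exact List.length_ofFn
  · rintro rfl
    exact ⟨o, l.get, rfl, List.ofFn_get l⟩

variable {ρ : Hist O A → A → O → ℝ} {π : Hist O A → A → ℝ}

theorem Dpi_nonneg (hρ : ∀ h a o, 0 ≤ ρ h a o) (hπ : ∀ h a, 0 ≤ π h a) :
    ∀ n (h ω : Hist O A), 0 ≤ Dpi ρ π n h ω
  | 0, h, ω => by simp only [Dpi]; positivity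
  | n + 1, h, ω => Finset.sum_nonneg fun a _ => mul_nonneg (hπ h a) <|
      Finset.sum_nonneg fun o _ => mul_nonneg (hρ h a o) (Dpi_nonneg hρ hπ n _ ω)

theorem hlen_hpre_of_Dpi_ne_zero :
    ∀ n (h ω : Hist O A), Dpi ρ π n h ω ≠ 0 →
      hlen ω = hlen h + n ∧ ∀ t ≤ hlen h, hpre ω t = hpre h t
  | 0, h, ω, hne => by
    obtain rfl : ω = h := by by_contra hωh; simp [Dpi, hωh] at hne
    exact ⟨rfl, fun _ _ => rfl⟩
  | n + 1, h, ω, hne => by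
    obtain ⟨a, -, ha⟩ := Finset.exists_ne_zero_of_sum_ne_zero hne
    obtain ⟨o, -, ho⟩ := Finset.exists_ne_zero_of_sum_ne_zero (right_ne_zero_of_mul ha)
    obtain ⟨hlenω, hpreω⟩ := hlen_hpre_of_Dpi_ne_zero n _ ω (right_ne_zero_of_mul ho)
    rw [hlen_hext] at hlenω
    refine ⟨by omega, fun t ht => ?_⟩
    rw [hpreω t (by rw [hlen_hext]; omega), hpre_hext ht]

theorem sum_Dpi_trajFinset (hρ : IsKernel ρ) (hπ : IsPolicy π) {T : ℕ} :
    ∀ n (h : Hist O A), hlen h + n = T → ∑ ω ∈ trajFinset O A T, Dpi ρ π n h ω = 1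
  | 0, h, hT => by
    simp only [Dpi, Finset.sum_ite_eq', mem_trajFinset.mpr hT, if_true]
  | n + 1, h, hT => by
    have hext_mass (a : A) (o : O) : ∑ ω ∈ trajFinset O A T, Dpi ρ π n (hext h a o) ω = 1 :=
      sum_Dpi_trajFinset hρ hπ n _ (by rw [hlen_hext]; omega)
    simp only [Dpi, Finset.mul_sum]
    rw [Finset.sum_comm]
    simp only [Finset.sum_comm (s := trajFinset O A T), ← Finset.mul_sum, hext_mass, mul_one,
      (hρ h _).2, (hπ h).2]

theorem isTrajDist_DpiH (hρ : IsKernel ρ) (hπ : IsPolicy π) {T : ℕ} {h : Hist O A}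
    (hle : hlen h ≤ T) : IsTrajDist T (DpiH T ρ π h) := by
  refine ⟨Dpi_nonneg (fun h a => (hρ h a).1) (fun h => (hπ h).1) _ h, fun ω hω => ?_,
    sum_Dpi_trajFinset hρ hπ _ h (by omega)⟩
  have := (hlen_hpre_of_Dpi_ne_zero (T - hlen h) h ω hω).1
  omega

theorem IsTrajDist.le_one {T : ℕ} {D : Hist O A → ℝ} (hD : IsTrajDist T D) (ω : Hist O A) :
    D ω ≤ 1 := by
  by_cases hω : D ω = 0
  · exact hω ▸ zero_le_one
  · have hmem : ω ∈ trajFinset O A T := mem_trajFinset.mpr (hD.2.1 ω hω)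
    exact hD.2.2 ▸ Finset.single_le_sum (fun i _ => hD.1 i) hmem

theorem expTotalReward_DpiH (hρ : IsKernel ρ) (hπ : IsPolicy π) {T : ℕ} {h : Hist O A}
    (hle : hlen h ≤ T) (r : Hist O A → ℝ) :
    expTotalReward T r (DpiH T ρ π h) =
      ∑ t ∈ Finset.range (hlen h), r (hpre h t) + Vval T ρ r π h := by
  have hsplit (ω : Hist O A) :
      DpiH T ρ π h ω * ∑ t ∈ Finset.range (T + 1), r (hpre ω t) =
        DpiH T ρ π h ω * ∑ t ∈ Finset.range (hlen h), r (hpre h t) +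
          DpiH T ρ π h ω * ∑ s ∈ Finset.Icc (hlen h) T, r (hpre ω s) := by
    by_cases hω : DpiH T ρ π h ω = 0
    · simp [hω]
    · have hpast := (hlen_hpre_of_Dpi_ne_zero (T - hlen h) h ω hω).2
      rw [sum_range_succ_eq_sum_range_add_sum_Icc _ hle, mul_add,
        Finset.sum_congr rfl fun t ht => congrArg r (hpast t (Finset.mem_range.mp ht).le)]
  rw [expTotalReward, Vval, Finset.sum_congr rfl fun ω _ => hsplit ω, Finset.sum_add_distrib,
    ← Finset.sum_mul, (isTrajDist_DpiH hρ hπ hle).2.2, one_mul]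

theorem Expresses.rel_DpiH_iff {T : ℕ} {r : Hist O A → ℝ}
    {R : (Hist O A → ℝ) → (Hist O A → ℝ) → Prop} (hr : Expresses T r R) (hρ : IsKernel ρ)
    {π₁ π₂ : Hist O A → A → ℝ} (hπ₁ : IsPolicy π₁) (hπ₂ : IsPolicy π₂) {h : Hist O A}
    (hle : hlen h ≤ T) :
    R (DpiH T ρ π₁ h) (DpiH T ρ π₂ h) ↔ Vval T ρ r π₁ h ≤ Vval T ρ r π₂ h := by
  rw [hr _ _ (isTrajDist_DpiH hρ hπ₁ hle) (isTrajDist_DpiH hρ hπ₂ hle),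
    expTotalReward_DpiH hρ hπ₁ hle, expTotalReward_DpiH hρ hπ₂ hle, add_le_add_iff_left]

theorem bddAbove_Vval (hρ : IsKernel ρ) (T : ℕ) (r : Hist O A → ℝ) {h : Hist O A}
    (hle : hlen h ≤ T) :
    BddAbove {v : ℝ | ∃ π' : Hist O A → A → ℝ, IsPolicy π' ∧ v = Vval T ρ r π' h} := by
  refine ⟨∑ ω ∈ trajFinset O A T, |∑ s ∈ Finset.Icc (hlen h) T, r (hpre ω s)|, ?_⟩
  rintro _ ⟨π', hπ', rfl⟩
  have hD := isTrajDist_DpiH hρ hπ' hle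
  exact sum_mul_le_sum_abs _ hD.1 hD.le_one

end Trajectories

theorem optimal_iff_value_sup_general {O A : Type*} [Fintype O] [Fintype A]
    [DecidableEq O] [DecidableEq A]
    (T : ℕ) (ρ0 : O → ℝ) (ρ : Hist O A → A → O → ℝ) (henv : IsEnv ρ0 ρ)
    (R : (Hist O A → ℝ) → (Hist O A → ℝ) → Prop)
    (r : Hist O A → ℝ) (hr : Expresses T r R)
    (π : Hist O A → A → ℝ) (hπ : IsPolicy π) :
    OptimalPolicy T ρ0 ρ R π ↔
      ∀ h, Attainable ρ0 ρ h → hlen h ≤ T →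
        Vval T ρ r π h =
          sSup {v : ℝ | ∃ π' : Hist O A → A → ℝ, IsPolicy π' ∧ v = Vval T ρ r π' h} := by
  have hρ : IsKernel ρ := henv.2
  refine forall₃_congr fun h _ hle => ?_
  rw [eq_csSup_iff_forall_le (bddAbove_Vval hρ T r hle) ⟨π, hπ, rfl⟩]
  exact ⟨fun hopt _ ⟨π', hπ', hv⟩ => hv ▸ (hr.rel_DpiH_iff hρ hπ' hπ hle).1 (hopt π' hπ'),
    fun hmax π' hπ' => (hr.rel_DpiH_iff hρ hπ' hπ hle).2 (hmax _ ⟨π', hπ', rfl⟩)⟩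

/-- with goals expressed by reward, optimality is equivalent to
attaining the supremal value at every attainable history. -/
theorem optimal_iff_value_sup {O A : Type*} [Fintype O] [Fintype A]
    [DecidableEq O] [DecidableEq A] [Nonempty O] [Nonempty A]
    (T : ℕ) (ρ0 : O → ℝ) (ρ : Hist O A → A → O → ℝ) (henv : IsEnv ρ0 ρ)
    (R : (Hist O A → ℝ) → (Hist O A → ℝ) → Prop)
    (r : Hist O A → ℝ) (hr : Expresses T r R)
    (π : Hist O A → A → ℝ) (hπ : IsPolicy π) :
    OptimalPolicy T ρ0 ρ R π ↔
      ∀ h, Attainable ρ0 ρ h → hlen h ≤ T →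
        Vval T ρ r π h =
          sSup {v : ℝ | ∃ π' : Hist O A → A → ℝ, IsPolicy π' ∧ v = Vval T ρ r π' h} :=
  optimal_iff_value_sup_general T ρ0 ρ henv R r hr π hπ
end
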